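/- Let F_X be an L×K fitting pattern over a field 𝔽 with minrk(F_X) = r, and suppose there exists a matrix F fitting F_X with rank(F) = r whose first r columns form an L×r matrix of rank r. Let σ be any involution of {1,…,r}. Define the L×K X-pattern B whose entry at (l, j) is 0 if j ≤ r and F_X(l, σ(j)) = 0, and X otherwise. Then minrk((F_X B; B F_X)) = r; that is, the 2-order extension with pattern (F_X B; B F_X) is a rank-invariant extension of F_X. -/

import Mathlib

/-!
The first `r` columns `A` of `F` are independent and span the column space of `F`, so
`F = A * C` where `C` restricts to the identity on those columns. With `Pσ` the permutation
matrix of `σ`, the matrix `G = A * Pσ * C` has as column `j ≤ r` the column `σ j` of `F`, hence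
fits `B`; and since `Pσ * Pσ = 1`, `(F G; G F) = (A; A * Pσ) * (C, Pσ * C)` has rank at most `r`.
Conversely every matrix fitting `(F_X B; B F_X)` has a top-left block fitting `F_X`, so its rank
is at least `minrk(F_X) = r`.
-/

open Matrix

/-- A pattern entry: `some false` = 0, `some true` = 1, `none` = X. -/
abbrev PatEntry := Option Bool

/-- A matrix `M` fits a pattern `P` if `M` is `0` at every `0`-entry of `P`
and `1` at every `1`-entry of `P` (X-entries are unconstrained). -/
def Fits {L K 𝔽 : Type*} [Zero 𝔽] [One 𝔽]
    (P : Matrix L K PatEntry) (M : Matrix L K 𝔽) : Prop :=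
  ∀ i j, (P i j = some false → M i j = 0) ∧ (P i j = some true → M i j = 1)

/-- The minrank of a pattern over the field `𝔽`. -/
noncomputable def minrk (𝔽 : Type*) [Field 𝔽] {L K : Type*} [Fintype K]
    (P : Matrix L K PatEntry) : ℕ :=
  sInf {n | ∃ M : Matrix L K 𝔽, Fits P M ∧ M.rank = n}

open Submodule

namespace Matrix

section Semiring

variable {m n o R : Type*} [NonAssocSemiring R] [Fintype o]

theorem mul_apply_eq_of_submatrix_eq_one [DecidableEq o] {C : Matrix o n R} {g : o → n}
    (hC : C.submatrix id g = 1) (X : Matrix m o R) (i : m) (j : o) : (X * C) i (g j) = X i j := by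
  simpa [hC] using congrFun (congrFun (submatrix_mul X C id id g Function.bijective_id) i) j

theorem mul_submatrix_perm_eq {σ : Equiv.Perm o} (hσ : Function.Involutive σ) (A : Matrix m o R)
    (C : Matrix o n R) : A * C.submatrix σ id = A.submatrix id σ * C := by
  ext i j
  simp only [mul_apply, submatrix_apply, id_eq]
  exact Fintype.sum_equiv σ _ _ fun k => by rw [hσ k]

end Semiring

section StrongRankCondition

variable {m n o R : Type*} [CommSemiring R] [StrongRankCondition R] [Fintype n] [Fintype o]

theorem rank_fromBlocks_mul_le (A A' : Matrix m o R) (C C' : Matrix o n R) :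
    (fromBlocks (A * C) (A * C') (A' * C) (A' * C')).rank ≤ Fintype.card o := by
  rw [← fromRows_mul_fromCols]
  exact (rank_mul_le_right _ _).trans (rank_le_card_height _)

end StrongRankCondition

section Field

variable {m n o 𝔽 : Type*} [Field 𝔽] [Fintype o]

theorem linearIndependent_col_of_rank_eq_card {A : Matrix m o 𝔽}
    (h : A.rank = Fintype.card o) : LinearIndependent 𝔽 A.col :=
  linearIndependent_iff_card_eq_finrank_span.2 (by rw [← h, rank_eq_finrank_span_cols]; rfl)

theorem eq_of_mul_eq_mul_of_rank_eq_card {A : Matrix m o 𝔽} (h : A.rank = Fintype.card o)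
    {X Y : Matrix o n 𝔽} (hXY : A * X = A * Y) : X = Y := by
  ext i j
  refine congrFun (mulVec_injective_iff.2 (linearIndependent_col_of_rank_eq_card h)
    (a₁ := X.col j) (a₂ := Y.col j) ?_) i
  exact funext fun l => congrFun (congrFun hXY l) j

variable [Fintype n]

theorem exists_submatrix_col_mul_eq_of_rank_eq (F : Matrix m n 𝔽) (g : o → n)
    (h : (F.submatrix id g).rank = F.rank) : ∃ C : Matrix o n 𝔽, F.submatrix id g * C = F := by
  set A := F.submatrix id g
  have hspan : span 𝔽 (Set.range A.col) = span 𝔽 (Set.range F.col) := by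
    have := FiniteDimensional.span_of_finite 𝔽 (Set.finite_range F.col)
    refine Submodule.eq_of_le_of_finrank_eq (span_mono ?_) ?_
    · rintro _ ⟨i, rfl⟩
      exact ⟨g i, rfl⟩
    · rwa [← rank_eq_finrank_span_cols, ← rank_eq_finrank_span_cols]
  have hcol (j : n) : F.col j ∈ LinearMap.range A.mulVecLin := by
    rw [range_mulVecLin, hspan]
    exact subset_span ⟨j, rfl⟩
  choose c hc using hcol
  exact ⟨(of c)ᵀ, ext fun l j => congrFun (hc j) l⟩

theorem exists_submatrix_col_mul_eq_and_submatrix_eq_one [DecidableEq o] (F : Matrix m n 𝔽)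
    (g : o → n) (hA : (F.submatrix id g).rank = Fintype.card o) (hF : F.rank = Fintype.card o) :
    ∃ C : Matrix o n 𝔽, F.submatrix id g * C = F ∧ C.submatrix id g = 1 := by
  obtain ⟨C, hC⟩ := exists_submatrix_col_mul_eq_of_rank_eq F g (hA.trans hF.symm)
  refine ⟨C, hC, eq_of_mul_eq_mul_of_rank_eq_card hA ?_⟩
  calc F.submatrix id g * C.submatrix id g = (F.submatrix id g * C).submatrix id g :=
        (submatrix_mul (F.submatrix id g) C id id g Function.bijective_id).symm
    _ = F.submatrix id g * (1 : Matrix o o 𝔽) := by rw [hC, Matrix.mul_one]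

end Field

end Matrix

section Fits

variable {L L' K K' : Type*}

theorem fits_fromBlocks {𝔽 : Type*} [Zero 𝔽] [One 𝔽] {P : Matrix L K PatEntry}
    {Q : Matrix L K' PatEntry} {R : Matrix L' K PatEntry} {S : Matrix L' K' PatEntry}
    {M : Matrix L K 𝔽} {N : Matrix L K' 𝔽} {O : Matrix L' K 𝔽} {U : Matrix L' K' 𝔽} :
    Fits (fromBlocks P Q R S) (fromBlocks M N O U) ↔ Fits P M ∧ Fits Q N ∧ Fits R O ∧ Fits S U := by
  simp only [Fits, Sum.forall, fromBlocks_apply₁₁, fromBlocks_apply₁₂, fromBlocks_apply₂₁,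
    fromBlocks_apply₂₂, forall_and, and_assoc, and_left_comm]

variable {𝔽 : Type*} [Field 𝔽] [Fintype K]

theorem minrk_le_rank {P : Matrix L K PatEntry} {M : Matrix L K 𝔽} (hM : Fits P M) :
    minrk 𝔽 P ≤ M.rank :=
  Nat.sInf_le ⟨M, hM, rfl⟩

theorem minrk_eq_of_fits {P : Matrix L K PatEntry} {M : Matrix L K 𝔽} {r : ℕ} (hM : Fits P M)
    (hMr : M.rank ≤ r) (hr : ∀ M' : Matrix L K 𝔽, Fits P M' → r ≤ M'.rank) : minrk 𝔽 P = r :=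
  le_antisymm ((minrk_le_rank hM).trans hMr) (le_csInf ⟨_, M, hM, rfl⟩ fun _ ⟨M', hM', h⟩ =>
    h ▸ hr M' hM')

theorem minrk_le_rank_of_fits_fromBlocks [Fintype K'] {P : Matrix L K PatEntry}
    {Q : Matrix L K' PatEntry} {R : Matrix L' K PatEntry} {S : Matrix L' K' PatEntry}
    {M : Matrix (L ⊕ L') (K ⊕ K') 𝔽} (hM : Fits (fromBlocks P Q R S) M) :
    minrk 𝔽 P ≤ M.rank := by
  rw [← fromBlocks_toBlocks M, fits_fromBlocks] at hM
  exact (minrk_le_rank hM.1).trans (rank_submatrix_le M Sum.inl Sum.inl)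

end Fits

open Classical in
/-- Simple rank-invariant 2-order extension of any IC problem: if `FX` has
minrank `r`, witnessed by a fitting matrix `F` of rank `r` whose first `r` columns
are linearly independent, then for any involution `σ` of `{1,…,r}`, the 2-order
extension with X-pattern `B` obtained by permuting the first `r` columns of `FX`
by `σ` and X-ing everything else is rank-invariant. -/
theorem systematic_two_order_extension {L K r : ℕ} (𝔽 : Type*) [Field 𝔽] (hr : r ≤ K)
    (FX : Matrix (Fin L) (Fin K) PatEntry)
    (hminrk : minrk 𝔽 FX = r)
    (F : Matrix (Fin L) (Fin K) 𝔽) (hF : Fits FX F) (hFrank : F.rank = r)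
    (hcols : (F.submatrix id (Fin.castLE hr)).rank = r)
    (σ : Equiv.Perm (Fin r)) (hσ : ∀ i, σ (σ i) = i)
    (B : Matrix (Fin L) (Fin K) PatEntry)
    (hBdef : ∀ l j, B l j =
      if ∃ j' : Fin r, j = Fin.castLE hr j' ∧ FX l (Fin.castLE hr (σ j')) = some false
      then some false else none) :
    minrk 𝔽 (Matrix.fromBlocks FX B B FX) = r := by
  set A := F.submatrix id (Fin.castLE hr)
  obtain ⟨C, hAC, hC⟩ := exists_submatrix_col_mul_eq_and_submatrix_eq_one F (Fin.castLE hr)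
    (by rw [hcols, Fintype.card_fin]) (by rw [hFrank, Fintype.card_fin])
  set G := A.submatrix id σ * C
  have hG : Fits B G := by
    intro l j
    rw [hBdef]
    split_ifs with h
    · obtain ⟨j', rfl, hFX⟩ := h
      exact ⟨fun _ => (mul_apply_eq_of_submatrix_eq_one hC _ l j').trans ((hF _ _).1 hFX),
        by simp⟩
    · simp
  have hblocks : fromBlocks F G G F =
      fromBlocks (A * C) (A * C.submatrix σ id) (A.submatrix id σ * C)
        (A.submatrix id σ * C.submatrix σ id) := by
    rw [mul_submatrix_perm_eq hσ, submatrix_mul_equiv, submatrix_id_id, hAC]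
  refine minrk_eq_of_fits (fits_fromBlocks.2 ⟨hF, hG, hG, hF⟩) ?_ fun M hM => ?_
  · rw [hblocks]
    exact (rank_fromBlocks_mul_le _ _ _ _).trans_eq (Fintype.card_fin r)
  · exact hminrk ▸ minrk_le_rank_of_fits_fromBlocks hM
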